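/- arXiv:1209.5495 — 4 statements merged into one kernel-verified Lean document; each statement's English description precedes it below -/
import Mathlib

section
/- Let n >= 1 and let A be a balanced subset of A_{2n}. Then for every unit vector a in R^{2n}, every 1 <= p <= 2n satisfies (#A/(2n-1)) * <a, e_p>^2 + sum_{U in A} <U(a), e_p>^2 = #A/(2n-1), and for all distinct p, q, (#A/(2n-1)) * <a, e_p><a, e_q> + sum_{U in A} <U(a), e_p><U(a), e_q> = 0. Consequently, the set {sqrt(#A/(2n-1)) * a} together with {U(a) : U in A} is a tight frame for R^{2n} with frame constant #A/(2n-1). -/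
open Finset RealInnerProductSpace

/-- The admissibility condition defining the set `A_{2n}`. -/
def Adm (n : ℕ) (U : (Fin (2*n) → ℤˣ) × (Fin (2*n) → Fin (2*n))) : Prop :=
  (∀ i, U.1 i = - U.1 (U.2 i)) ∧ (∀ i, U.2 (U.2 i) = i)

/-- A subset `A ⊆ A_{2n}` is balanced. -/
def IsBalanced (n : ℕ) (A : Finset ((Fin (2*n) → ℤˣ) × (Fin (2*n) → Fin (2*n)))) : Prop :=
  (∀ p q : Fin (2*n), p ≠ q →
    ((A.filter (fun U => U.2 p = q)).card : ℝ) = A.card / (2*(n:ℝ) - 1)) ∧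
  (∀ p q r s : Fin (2*n), p ≠ q → p ≠ r → p ≠ s → q ≠ r → q ≠ s → r ≠ s →
    (A.filter (fun U => U.1 p * U.1 q = -1 ∧
        (U.2 r = p ∧ U.2 s = q ∨ U.2 r = q ∧ U.2 s = p))).card =
    (A.filter (fun U => U.1 p * U.1 q = 1 ∧
        (U.2 r = p ∧ U.2 s = q ∨ U.2 r = q ∧ U.2 s = p))).card)

/-- The operator `U_{(ε,k)} : ℝ^{2n} → ℝ^{2n}`, `a ↦ (ε_{k_i} a_{k_i})_i`. -/
def Uact (n : ℕ) (U : (Fin (2*n) → ℤˣ) × (Fin (2*n) → Fin (2*n)))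
    (a : EuclideanSpace ℝ (Fin (2*n))) : EuclideanSpace ℝ (Fin (2*n)) :=
  WithLp.toLp 2 (fun i => ((U.1 (U.2 i) : ℤ) : ℝ) * a (U.2 i))

/-!
The frame operator of the family has matrix entries `C a_p a_q + ∑_U (U a)_p (U a)_q`, with
`C = #A / (2n - 1)`, so everything reduces to showing that these equal `C δ_pq`.
Since `(U a)_p = ε_{k_p} a_{k_p}`, the diagonal entry is `C a_p² + ∑_r #{U | k_p = r} a_r²`, which
is `C a_p² + C (1 - a_p²)` by (i), because `k` has no fixed points. Off the diagonal,
`(U a)_p (U a)_q = ε_p ε_q a_{k_p} a_{k_q}`: the `U` with `k_p = q` contribute `-C a_p a_q` by (i),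
and for every other `U` the pair `{k_p, k_q}` is disjoint from `{p, q}`, so by (ii) the signs
`ε_p ε_q` cancel over the `U` with the same pair `{k_p, k_q}`.
-/

theorem sum_inner_smul_eq_smul_of_sum_mul_eq {ι κ : Type*} [Fintype ι] [DecidableEq ι]
    (s : Finset κ) (f : κ → EuclideanSpace ℝ ι) (C : ℝ)
    (h : ∀ p q, ∑ i ∈ s, f i p * f i q = if p = q then C else 0) (x : EuclideanSpace ℝ ι) :
    ∑ i ∈ s, ⟪f i, x⟫ • f i = C • x := by
  ext p
  calc (∑ i ∈ s, ⟪f i, x⟫ • f i) p = ∑ q, x q * ∑ i ∈ s, f i q * f i p := by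
        simp only [WithLp.ofLp_sum, WithLp.ofLp_smul, Finset.sum_apply, Pi.smul_apply,
          smul_eq_mul, PiLp.inner_apply, RCLike.inner_apply, conj_trivial, Finset.sum_mul,
          Finset.mul_sum]
        rw [Finset.sum_comm]
        exact Finset.sum_congr rfl fun _ _ => Finset.sum_congr rfl fun _ _ => by ring
    _ = (C • x) p := by simp [h, mul_comm]

theorem sum_units_eq_card_sub_card {α R : Type*} [Ring R] (s : Finset α) (u : α → ℤˣ) :
    ∑ x ∈ s, ((u x : ℤ) : R) = #{x ∈ s | u x = 1} - #{x ∈ s | u x = -1} := by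
  have hneg : {x ∈ s | ¬u x = 1} = {x ∈ s | u x = -1} :=
    Finset.filter_congr fun x _ => Int.units_ne_iff_eq_neg
  rw [← Finset.sum_filter_add_sum_filter_not s (fun x => u x = 1), hneg, sub_eq_add_neg]
  congr 1
  · rw [Finset.sum_congr rfl fun x hx => by rw [(Finset.mem_filter.mp hx).2]]
    simp
  · rw [Finset.sum_congr rfl fun x hx => by rw [(Finset.mem_filter.mp hx).2]]
    simp

theorem sum_mul_mul_eq_zero_of_antisymm {ι : Type*} [Fintype ι] (N : ι → ι → ℝ)
    (hN : ∀ r s, N r s = -N s r) (x : ι → ℝ) : ∑ r, ∑ s, N r s * (x r * x s) = 0 := by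
  have hswap : ∑ r, ∑ s, N r s * (x r * x s) = -∑ r, ∑ s, N r s * (x r * x s) := by
    conv_lhs => rw [Finset.sum_comm]
    simp only [← Finset.sum_neg_distrib]
    exact Finset.sum_congr rfl fun r _ => Finset.sum_congr rfl fun s _ => by rw [hN]; ring
  linarith

namespace Adm

variable {n : ℕ} {U : (Fin (2*n) → ℤˣ) × (Fin (2*n) → Fin (2*n))}

theorem apply_eq_iff (hU : Adm n U) {p r : Fin (2*n)} : U.2 p = r ↔ U.2 r = p :=
  ⟨fun h => h ▸ hU.2 p, fun h => h ▸ hU.2 r⟩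

theorem injective (hU : Adm n U) : Function.Injective U.2 :=
  Function.LeftInverse.injective hU.2

theorem apply_ne (hU : Adm n U) (p : Fin (2*n)) : U.2 p ≠ p :=
  fun h => units_ne_neg_self (U.1 p) (by simpa only [h] using hU.1 p)

theorem sign_mul_sign_of_apply_eq (hU : Adm n U) {p q : Fin (2*n)} (h : U.2 p = q) :
    U.1 p * U.1 q = -1 := by
  rw [← h, ← neg_eq_iff_eq_neg.mpr (hU.1 p), mul_neg, Int.units_mul_self]

theorem pairwise_ne_of_apply_ne (hU : Adm n U) {p q : Fin (2*n)} (hpq : p ≠ q) (hq : U.2 p ≠ q) :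
    p ≠ U.2 p ∧ p ≠ U.2 q ∧ q ≠ U.2 p ∧ q ≠ U.2 q ∧ U.2 p ≠ U.2 q :=
  ⟨(hU.apply_ne p).symm, fun h => hq (hU.apply_eq_iff.mpr h.symm), hq.symm,
    (hU.apply_ne q).symm, hU.injective.ne hpq⟩

theorem Uact_apply_mul_Uact_apply (hU : Adm n U) (a : EuclideanSpace ℝ (Fin (2*n)))
    (p q : Fin (2*n)) : Uact n U a p * Uact n U a q =
      ((U.1 p * U.1 q : ℤˣ) : ℤ) * (a (U.2 p) * a (U.2 q)) := by
  have hsign : ∀ i, U.1 (U.2 i) = -U.1 i := fun i => by rw [hU.1 i, neg_neg]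
  simp only [Uact, hsign]
  push_cast
  ring

end Adm

theorem Uact_apply_mul_self (n : ℕ) (U : (Fin (2*n) → ℤˣ) × (Fin (2*n) → Fin (2*n)))
    (a : EuclideanSpace ℝ (Fin (2*n))) (p : Fin (2*n)) :
    Uact n U a p * Uact n U a p = a (U.2 p) * a (U.2 p) := by
  have hsign : ((U.1 (U.2 p) : ℤ) : ℝ) * (U.1 (U.2 p) : ℤ) = 1 := by
    exact_mod_cast Int.units_coe_mul_self _
  simp only [Uact]
  linear_combination (a (U.2 p) * a (U.2 p)) * hsign

namespace IsBalanced

variable {n : ℕ} {A : Finset ((Fin (2*n) → ℤˣ) × (Fin (2*n) → Fin (2*n)))}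

theorem card_filter_apply_eq (hA : ∀ U ∈ A, Adm n U) (hbal : IsBalanced n A) (p r : Fin (2*n)) :
    (#{U ∈ A | U.2 p = r} : ℝ) = if r = p then 0 else A.card / (2*(n:ℝ) - 1) := by
  split_ifs with h
  · subst h
    simp [Finset.filter_false_of_mem fun U hU => (hA U hU).apply_ne r]
  · exact hbal.1 p r (Ne.symm h)

theorem sum_apply_mul_self (hA : ∀ U ∈ A, Adm n U) (hbal : IsBalanced n A)
    (a : Fin (2*n) → ℝ) (p : Fin (2*n)) :
    ∑ U ∈ A, a (U.2 p) * a (U.2 p) =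
      A.card / (2*(n:ℝ) - 1) * (∑ r, a r * a r - a p * a p) := by
  rw [← Finset.sum_fiberwise' A (fun U => U.2 p) (fun r => a r * a r)]
  simp only [Finset.sum_const, nsmul_eq_mul, card_filter_apply_eq hA hbal, ite_mul, zero_mul,
    Finset.sum_ite, Finset.filter_ne', ← Finset.mul_sum,
    Finset.sum_erase_eq_sub (Finset.mem_univ p)]
  ring

theorem sum_sign_eq_zero (hbal : IsBalanced n A) {p q r s : Fin (2*n)} (hpq : p ≠ q)
    (hpr : p ≠ r) (hps : p ≠ s) (hqr : q ≠ r) (hqs : q ≠ s) (hrs : r ≠ s) :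
    ∑ U ∈ A with U.2 r = p ∧ U.2 s = q ∨ U.2 r = q ∧ U.2 s = p,
      (((U.1 p * U.1 q : ℤˣ) : ℤ) : ℝ) = 0 := by
  have hcard := hbal.2 p q r s hpq hpr hps hqr hqs hrs
  rw [sum_units_eq_card_sub_card, Finset.filter_filter, Finset.filter_filter, sub_eq_zero]
  simp only [and_comm] at hcard ⊢
  exact_mod_cast hcard.symm

theorem sum_sign_filter_add_sum_sign_filter_swap (hA : ∀ U ∈ A, Adm n U) (hbal : IsBalanced n A)
    {p q : Fin (2*n)} (hpq : p ≠ q) (r s : Fin (2*n)) :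
    ∑ U ∈ A with U.2 p ≠ q ∧ U.2 p = r ∧ U.2 q = s, (((U.1 p * U.1 q : ℤˣ) : ℤ) : ℝ) +
      ∑ U ∈ A with U.2 p ≠ q ∧ U.2 p = s ∧ U.2 q = r, (((U.1 p * U.1 q : ℤˣ) : ℤ) : ℝ) = 0 := by
  by_cases hd : p ≠ r ∧ p ≠ s ∧ q ≠ r ∧ q ≠ s ∧ r ≠ s
  · obtain ⟨hpr, hps, hqr, hqs, hrs⟩ := hd
    rw [← sum_sign_eq_zero hbal hpq hpr hps hqr hqs hrs, Finset.sum_filter, Finset.sum_filter,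
      Finset.sum_filter, ← Finset.sum_add_distrib]
    refine Finset.sum_congr rfl fun U hU => ?_
    -- `hinv` lets `grind` pass between `k p = r` and `k r = p`.
    have hinv := (hA U hU).2
    split_ifs <;> grind
  · have hempty : ∀ r s, ¬(p ≠ r ∧ p ≠ s ∧ q ≠ r ∧ q ≠ s ∧ r ≠ s) →
        {U ∈ A | U.2 p ≠ q ∧ U.2 p = r ∧ U.2 q = s} = ∅ := by
      refine fun r s hd => Finset.filter_false_of_mem fun U hU ⟨hq, hr, hs⟩ => hd ?_
      rw [← hr, ← hs]
      exact (hA U hU).pairwise_ne_of_apply_ne hpq hq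
    rw [hempty r s hd, hempty s r (by tauto), Finset.sum_empty, add_zero]

theorem sum_sign_mul_filter_apply_eq (hA : ∀ U ∈ A, Adm n U) (hbal : IsBalanced n A)
    (a : EuclideanSpace ℝ (Fin (2*n))) {p q : Fin (2*n)} (hpq : p ≠ q) :
    ∑ U ∈ A with U.2 p = q, (((U.1 p * U.1 q : ℤˣ) : ℤ) : ℝ) * (a (U.2 p) * a (U.2 q)) =
      -(A.card / (2*(n:ℝ) - 1) * (a p * a q)) := by
  have hterm : ∀ U ∈ {U ∈ A | U.2 p = q},
      (((U.1 p * U.1 q : ℤˣ) : ℤ) : ℝ) * (a (U.2 p) * a (U.2 q)) = -(a p * a q) := by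
    intro U hU
    obtain ⟨hU, h⟩ := Finset.mem_filter.mp hU
    rw [(hA U hU).sign_mul_sign_of_apply_eq h, h, (hA U hU).apply_eq_iff.mp h]
    push_cast
    ring
  rw [Finset.sum_congr rfl hterm, Finset.sum_const, nsmul_eq_mul, hbal.1 p q hpq]
  ring

theorem sum_sign_mul_filter_apply_ne (hA : ∀ U ∈ A, Adm n U) (hbal : IsBalanced n A)
    (a : EuclideanSpace ℝ (Fin (2*n))) {p q : Fin (2*n)} (hpq : p ≠ q) :
    ∑ U ∈ A with U.2 p ≠ q, (((U.1 p * U.1 q : ℤˣ) : ℤ) : ℝ) * (a (U.2 p) * a (U.2 q)) = 0 := by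
  set N : Fin (2*n) → Fin (2*n) → ℝ := fun r s =>
    ∑ U ∈ A with U.2 p ≠ q ∧ U.2 p = r ∧ U.2 q = s, (((U.1 p * U.1 q : ℤˣ) : ℤ) : ℝ)
  calc _ = ∑ r, ∑ s, N r s * (a r * a s) := by
        rw [← Finset.sum_fiberwise _ (fun U => (U.2 p, U.2 q)), Fintype.sum_prod_type]
        refine Finset.sum_congr rfl fun r _ => Finset.sum_congr rfl fun s _ => ?_
        rw [Finset.filter_filter, Finset.sum_mul]
        refine Finset.sum_congr (Finset.filter_congr fun U _ => by simp [Prod.ext_iff])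
          fun U hU => ?_
        obtain ⟨-, -, hr, hs⟩ := Finset.mem_filter.mp hU
        rw [hr, hs]
    _ = 0 := sum_mul_mul_eq_zero_of_antisymm N (fun r s => eq_neg_of_add_eq_zero_left
        (sum_sign_filter_add_sum_sign_filter_swap hA hbal hpq r s)) _

theorem sum_Uact_apply_mul_Uact_apply_of_ne (hA : ∀ U ∈ A, Adm n U) (hbal : IsBalanced n A)
    (a : EuclideanSpace ℝ (Fin (2*n))) {p q : Fin (2*n)} (hpq : p ≠ q) :
    ∑ U ∈ A, Uact n U a p * Uact n U a q = -(A.card / (2*(n:ℝ) - 1) * (a p * a q)) := by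
  rw [Finset.sum_congr rfl fun U hU => (hA U hU).Uact_apply_mul_Uact_apply a p q,
    ← Finset.sum_filter_add_sum_filter_not A (fun U => U.2 p = q),
    sum_sign_mul_filter_apply_eq hA hbal a hpq, sum_sign_mul_filter_apply_ne hA hbal a hpq,
    add_zero]

theorem mul_add_sum_Uact_apply_mul_Uact_apply (hA : ∀ U ∈ A, Adm n U) (hbal : IsBalanced n A)
    {a : EuclideanSpace ℝ (Fin (2*n))} (ha : ‖a‖ = 1) (p q : Fin (2*n)) :
    A.card / (2*(n:ℝ) - 1) * (a p * a q) + ∑ U ∈ A, Uact n U a p * Uact n U a q =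
      if p = q then A.card / (2*(n:ℝ) - 1) else 0 := by
  split_ifs with h
  · subst h
    have hnorm : ∑ r, a r * a r = 1 := by
      simpa [ha, sq] using (EuclideanSpace.real_norm_sq_eq a).symm
    rw [Finset.sum_congr rfl fun U _ => Uact_apply_mul_self n U a p, sum_apply_mul_self hA hbal,
      hnorm]
    ring
  · rw [sum_Uact_apply_mul_Uact_apply_of_ne hA hbal a h]
    ring

end IsBalanced

theorem balanced_gives_tight_frame (n : ℕ) (hn : 1 ≤ n)
    (A : Finset ((Fin (2*n) → ℤˣ) × (Fin (2*n) → Fin (2*n))))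
    (hA : ∀ U ∈ A, Adm n U) (hA0 : A.Nonempty) (hbal : IsBalanced n A)
    (a : EuclideanSpace ℝ (Fin (2*n))) (ha : ‖a‖ = 1) :
    (∀ p : Fin (2*n),
      ((A.card : ℝ) / (2*(n:ℝ) - 1)) * ⟪a, EuclideanSpace.single p (1:ℝ)⟫^2 +
        ∑ U ∈ A, ⟪Uact n U a, EuclideanSpace.single p (1:ℝ)⟫^2 =
      (A.card : ℝ) / (2*(n:ℝ) - 1)) ∧
    (∀ p q : Fin (2*n), p ≠ q →
      ((A.card : ℝ) / (2*(n:ℝ) - 1)) * (⟪a, EuclideanSpace.single p (1:ℝ)⟫ *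
          ⟪a, EuclideanSpace.single q (1:ℝ)⟫) +
        ∑ U ∈ A, ⟪Uact n U a, EuclideanSpace.single p (1:ℝ)⟫ *
          ⟪Uact n U a, EuclideanSpace.single q (1:ℝ)⟫ = 0) ∧
    (∀ x : EuclideanSpace ℝ (Fin (2*n)),
      x = ((A.card : ℝ) / (2*(n:ℝ) - 1))⁻¹ •
        (⟪Real.sqrt ((A.card : ℝ) / (2*(n:ℝ) - 1)) • a, x⟫ •
            (Real.sqrt ((A.card : ℝ) / (2*(n:ℝ) - 1)) • a) +
          ∑ U ∈ A, ⟪Uact n U a, x⟫ • Uact n U a)) := by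
  set C : ℝ := A.card / (2*(n:ℝ) - 1)
  have hCpos : 0 < C :=
    div_pos (by exact_mod_cast hA0.card_pos) (by linarith [(Nat.one_le_cast.mpr hn : (1:ℝ) ≤ n)])
  have hcoord : ∀ (y : EuclideanSpace ℝ (Fin (2*n))) p, ⟪y, EuclideanSpace.single p (1:ℝ)⟫ = y p :=
    fun y p => by simp [EuclideanSpace.inner_single_right]
  have key := IsBalanced.mul_add_sum_Uact_apply_mul_Uact_apply hA hbal ha
  refine ⟨fun p => by simpa [hcoord, sq] using key p p,
    fun p q hpq => by simpa [hcoord, hpq] using key p q, fun x => ?_⟩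
  have hframe := sum_inner_smul_eq_smul_of_sum_mul_eq (insertNone A)
    (fun U => U.elim (Real.sqrt C • a) (Uact n · a)) C (fun p q => by
      rw [Finset.sum_insertNone, ← key p q]
      simp only [Option.elim, PiLp.smul_apply, smul_eq_mul]
      rw [mul_mul_mul_comm, Real.mul_self_sqrt hCpos.le]) x
  rw [Finset.sum_insertNone] at hframe
  simp only [Option.elim] at hframe
  rw [hframe, inv_smul_smul₀ hCpos.ne']
end

section
/- Let n >= 1 and let A be a balanced subset of A_{2n}. Then for every a on the unit sphere S^{2n-1}, the collection {U(a) : U in A} is a finite unit tight frame for the tangent space T_a S^{2n-1} = a^perp, with frame constant #A/(2n-1). That is, for all x in R^{2n} with <x,a> = 0, x = ((2n-1)/#A) * sum_{U in A} <x, U(a)> U(a). -/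
open Finset RealInnerProductSpace

/-!
Each `U` is a signed permutation matrix, so `‖U a‖ = ‖a‖`, and since `ε_i = -ε_{k_i}` the terms of
`⟪U a, a⟫` cancel in pairs `i, k_i`. For the frame operator `∑_U (U a)(U a)ᵀ`, put `m = #A/(2n-1)`.
Its diagonal entry `∑_U a_{k_j}²` is `m (‖a‖² - a_j²)` by condition (i). For an off-diagonal
entry `(i, j)`, group the `U` by the unordered pair `{k_i, k_j}`: the pair `{i, j}` occurs exactly
when `k` swaps `i` and `j`, which by (i) contributes `-m a_i a_j`; every other pair is disjoint
from `{i, j}`, and by (ii) its signed count `∑ ε_p ε_q` vanishes. So the frame operator is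
`m (‖a‖² I - a aᵀ)`, which is `m I` on `a^⊥`.
-/

theorem Int.cast_units_mul_self {R : Type*} [Ring R] (u : ℤˣ) : ((u : ℤ) : R) * (u : ℤ) = 1 := by
  rw [← Int.cast_mul, ← Units.val_mul, Int.units_mul_self, Units.val_one, Int.cast_one]

theorem sum_cast_intUnits_eq_card_sub_card {α : Type*} (s : Finset α) (g : α → ℤˣ) :
    ∑ x ∈ s, ((g x : ℤ) : ℝ) = #{x ∈ s | g x = 1} - #{x ∈ s | g x = -1} := by
  have hsign (x : α) :
      ((g x : ℤ) : ℝ) = (if g x = 1 then 1 else 0) - (if g x = -1 then 1 else 0) := by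
    rcases Int.units_eq_one_or (g x) with h | h <;> simp [h]
  simp only [hsign, sum_sub_distrib, sum_boole]

section

variable {n : ℕ} {U : (Fin (2*n) → ℤˣ) × (Fin (2*n) → Fin (2*n))}
  {A : Finset ((Fin (2*n) → ℤˣ) × (Fin (2*n) → Fin (2*n)))}

@[simp]
theorem Uact_apply (a : EuclideanSpace ℝ (Fin (2*n))) (i : Fin (2*n)) :
    Uact n U a i = ((U.1 (U.2 i) : ℤ) : ℝ) * a (U.2 i) := rfl

namespace Adm

theorem involutive (h : Adm n U) : Function.Involutive U.2 := h.2

theorem snd_apply_ne (h : Adm n U) (i : Fin (2*n)) : U.2 i ≠ i := fun he => by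
  have hi := h.1 i
  rw [he] at hi
  exact Int.units_ne_iff_eq_neg.2 hi rfl

theorem cast_fst_snd_apply (h : Adm n U) (i : Fin (2*n)) :
    ((U.1 (U.2 i) : ℤ) : ℝ) = -((U.1 i : ℤ) : ℝ) := by
  rw [h.1 (U.2 i), h.2 i, Units.val_neg, Int.cast_neg]

theorem norm_Uact (h : Adm n U) (a : EuclideanSpace ℝ (Fin (2*n))) : ‖Uact n U a‖ = ‖a‖ := by
  simp only [EuclideanSpace.norm_eq, Uact_apply, norm_mul, Int.norm_cast_real, Int.norm_coe_units,
    one_mul]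
  congr 1
  exact Equiv.sum_comp h.involutive.toPerm (fun i => ‖a i‖ ^ 2)

theorem inner_Uact_self (h : Adm n U) (a : EuclideanSpace ℝ (Fin (2*n))) :
    ⟪Uact n U a, a⟫ = 0 := by
  rw [PiLp.inner_apply]
  refine sum_involution (fun i _ => U.2 i) (fun i _ => ?_) (fun i _ _ => h.snd_apply_ne i)
    (fun _ _ => mem_univ _) (fun i _ => h.2 i)
  simp only [Uact_apply, Real.inner_apply, h.2 i, h.cast_fst_snd_apply]
  ring

theorem snd_apply_eq_comm (h : Adm n U) {i j : Fin (2*n)} : U.2 i = j ↔ U.2 j = i :=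
  ⟨fun hij => hij ▸ h.2 i, fun hji => hji ▸ h.2 j⟩

theorem snd_apply_eq_or_pairwise_ne (h : Adm n U) {i j : Fin (2*n)} (hij : i ≠ j) :
    U.2 j = i ∨ (U.2 i ≠ U.2 j ∧ U.2 i ≠ i ∧ U.2 i ≠ j ∧ U.2 j ≠ i ∧ U.2 j ≠ j) :=
  or_iff_not_imp_left.2 fun hji => ⟨h.involutive.injective.ne hij, h.snd_apply_ne i,
    fun hij' => hji (h.snd_apply_eq_comm.1 hij'), hji, h.snd_apply_ne j⟩

theorem mk_snd_apply_eq_mk_iff (h : Adm n U) {i j : Fin (2*n)} (hij : i ≠ j) :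
    s(U.2 i, U.2 j) = s(i, j) ↔ U.2 j = i := by
  rcases h.snd_apply_eq_or_pairwise_ne hij with hji | hne
  · simp [h.snd_apply_eq_comm.2 hji, hji, Sym2.eq_swap]
  · simp [hne.2.1, hne.2.2.2.1]

end Adm

theorem sum_comp_snd_apply (hA : ∀ U ∈ A, Adm n U) (hbal : IsBalanced n A)
    (f : Fin (2*n) → ℝ) (j : Fin (2*n)) :
    ∑ U ∈ A, f (U.2 j) = #A / (2 * (n:ℝ) - 1) * ∑ q ∈ univ.erase j, f q := by
  have hfiber (q : Fin (2*n)) : ∑ U ∈ A with U.2 j = q, f (U.2 j) = #{U ∈ A | U.2 j = q} * f q := by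
    rw [sum_congr rfl fun U hU => by rw [(mem_filter.1 hU).2], sum_const, nsmul_eq_mul]
  have hself : {U ∈ A | U.2 j = j} = ∅ :=
    filter_eq_empty_iff.2 fun U hU => (hA U hU).snd_apply_ne j
  rw [← sum_fiberwise A (fun U => U.2 j), ← add_sum_erase _ _ (mem_univ j), mul_sum]
  rw [hfiber, hself, card_empty, Nat.cast_zero, zero_mul, zero_add]
  exact sum_congr rfl fun q hq => by rw [hfiber, hbal.1 j q (ne_of_mem_erase hq).symm]

theorem sum_Uact_apply_sq (hA : ∀ U ∈ A, Adm n U) (hbal : IsBalanced n A)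
    (a : EuclideanSpace ℝ (Fin (2*n))) (j : Fin (2*n)) :
    ∑ U ∈ A, Uact n U a j ^ 2 = #A / (2 * (n:ℝ) - 1) * (‖a‖ ^ 2 - a j ^ 2) := by
  have hsq (U) : Uact n U a j ^ 2 = a (U.2 j) ^ 2 := by
    rw [Uact_apply, mul_pow, sq ((U.1 (U.2 j) : ℤ) : ℝ), Int.cast_units_mul_self, one_mul]
  simp only [hsq]
  rw [sum_comp_snd_apply hA hbal (fun q => a q ^ 2), sum_erase_eq_sub (mem_univ j),
    EuclideanSpace.real_norm_sq_eq]

theorem IsBalanced.sum_sign_mul_eq_zero (hbal : IsBalanced n A) {p q r s : Fin (2*n)}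
    (hpq : p ≠ q) (hpr : p ≠ r) (hps : p ≠ s) (hqr : q ≠ r) (hqs : q ≠ s) (hrs : r ≠ s) :
    ∑ U ∈ A with s(U.2 r, U.2 s) = s(p, q), (((U.1 p * U.1 q : ℤˣ) : ℤ) : ℝ) = 0 := by
  have hcount := hbal.2 p q r s hpq hpr hps hqr hqs hrs
  rw [sum_cast_intUnits_eq_card_sub_card, filter_filter, filter_filter, sub_eq_zero]
  simp only [Sym2.eq_iff, and_comm (a := _ ∨ _)]
  exact_mod_cast hcount.symm

theorem sum_Uact_apply_mul_apply_of_snd_apply_eq (hA : ∀ U ∈ A, Adm n U) (hbal : IsBalanced n A)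
    (a : EuclideanSpace ℝ (Fin (2*n))) {i j : Fin (2*n)} (hij : i ≠ j) :
    ∑ U ∈ A with U.2 j = i, Uact n U a i * Uact n U a j =
      -(#A / (2 * (n:ℝ) - 1) * (a i * a j)) := by
  have hterm : ∀ U ∈ {U ∈ A | U.2 j = i}, Uact n U a i * Uact n U a j = -(a i * a j) := by
    intro U hU
    obtain ⟨hUA, hji⟩ := mem_filter.1 hU
    have hij' : U.2 i = j := (hA U hUA).snd_apply_eq_comm.2 hji
    have hsign := (hA U hUA).cast_fst_snd_apply i
    rw [hij'] at hsign
    rw [Uact_apply, Uact_apply, hij', hji, hsign]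
    linear_combination (-(a i * a j)) * Int.cast_units_mul_self (R := ℝ) (U.1 i)
  rw [sum_congr rfl hterm, sum_const, nsmul_eq_mul, hbal.1 j i hij.symm]
  ring

theorem sum_Uact_apply_mul_apply_fiber_eq_zero (hA : ∀ U ∈ A, Adm n U) (hbal : IsBalanced n A)
    (a : EuclideanSpace ℝ (Fin (2*n))) {i j : Fin (2*n)} (hij : i ≠ j) {z : Sym2 (Fin (2*n))}
    (hz : z ≠ s(i, j)) :
    ∑ U ∈ A with s(U.2 i, U.2 j) = z, Uact n U a i * Uact n U a j = 0 := by
  induction z using Sym2.ind with | h p q => ?_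
  by_cases hd : p ≠ q ∧ p ≠ i ∧ p ≠ j ∧ q ≠ i ∧ q ≠ j
  · obtain ⟨hpq, hpi, hpj, hqi, hqj⟩ := hd
    have hterm : ∀ U ∈ {U ∈ A | s(U.2 i, U.2 j) = s(p, q)}, Uact n U a i * Uact n U a j =
        a p * a q * (((U.1 p * U.1 q : ℤˣ) : ℤ) : ℝ) := by
      intro U hU
      rcases Sym2.eq_iff.1 (mem_filter.1 hU).2 with ⟨hi, hj⟩ | ⟨hi, hj⟩ <;>
        simp only [Uact_apply, hi, hj, Units.val_mul, Int.cast_mul] <;> ring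
    rw [sum_congr rfl hterm, ← mul_sum, hbal.sum_sign_mul_eq_zero hpq hpi hpj hqi hqj hij, mul_zero]
  · refine sum_eq_zero fun U hU => absurd ?_ hd
    obtain ⟨hUA, hU⟩ := mem_filter.1 hU
    rcases (hA U hUA).snd_apply_eq_or_pairwise_ne hij with hji | hne
    · exact absurd (hU ▸ ((hA U hUA).mk_snd_apply_eq_mk_iff hij).2 hji) hz
    · rcases Sym2.eq_iff.1 hU with ⟨rfl, rfl⟩ | ⟨rfl, rfl⟩ <;> tauto

theorem sum_Uact_apply_mul_apply_of_ne (hA : ∀ U ∈ A, Adm n U) (hbal : IsBalanced n A)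
    (a : EuclideanSpace ℝ (Fin (2*n))) {i j : Fin (2*n)} (hij : i ≠ j) :
    ∑ U ∈ A, Uact n U a i * Uact n U a j = -(#A / (2 * (n:ℝ) - 1) * (a i * a j)) := by
  rw [← sum_fiberwise A (fun U => s(U.2 i, U.2 j)), sum_eq_single s(i, j)
    (fun z _ hz => sum_Uact_apply_mul_apply_fiber_eq_zero hA hbal a hij hz)
    (fun h => absurd (mem_univ _) h),
    filter_congr fun U hU => (hA U hU).mk_snd_apply_eq_mk_iff hij]
  exact sum_Uact_apply_mul_apply_of_snd_apply_eq hA hbal a hij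

theorem sum_Uact_apply_mul_apply (hA : ∀ U ∈ A, Adm n U) (hbal : IsBalanced n A)
    (a : EuclideanSpace ℝ (Fin (2*n))) (i j : Fin (2*n)) :
    ∑ U ∈ A, Uact n U a i * Uact n U a j =
      #A / (2 * (n:ℝ) - 1) * ((if i = j then ‖a‖ ^ 2 else 0) - a i * a j) := by
  obtain rfl | hij := eq_or_ne i j
  · simpa [← sq] using sum_Uact_apply_sq hA hbal a i
  · simpa [hij] using sum_Uact_apply_mul_apply_of_ne hA hbal a hij

theorem sum_inner_Uact_smul_Uact (hA : ∀ U ∈ A, Adm n U) (hbal : IsBalanced n A)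
    (a x : EuclideanSpace ℝ (Fin (2*n))) :
    ∑ U ∈ A, ⟪x, Uact n U a⟫ • Uact n U a =
      (#A / (2 * (n:ℝ) - 1)) • (‖a‖ ^ 2 • x - ⟪x, a⟫ • a) := by
  ext j
  simp only [WithLp.ofLp_sum, Finset.sum_apply, PiLp.smul_apply, PiLp.sub_apply, smul_eq_mul,
    PiLp.inner_apply, Real.inner_apply, sum_mul]
  rw [sum_comm]
  simp only [mul_assoc, ← mul_sum, sum_Uact_apply_mul_apply hA hbal a]
  simp only [mul_left_comm (x _), ← mul_sum, mul_sub, mul_ite, mul_zero, sum_sub_distrib,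
    sum_ite_eq', mem_univ, ite_true]
  ring

end

theorem balanced_gives_moving_funtf_general (n : ℕ)
    (A : Finset ((Fin (2*n) → ℤˣ) × (Fin (2*n) → Fin (2*n))))
    (hA : ∀ U ∈ A, Adm n U) (hA0 : A.Nonempty) (hbal : IsBalanced n A)
    (a : EuclideanSpace ℝ (Fin (2*n))) (ha : ‖a‖ = 1) :
    (∀ U ∈ A, ‖Uact n U a‖ = 1 ∧ ⟪Uact n U a, a⟫ = 0) ∧
    (∀ x : EuclideanSpace ℝ (Fin (2*n)), ⟪x, a⟫ = 0 →
      x = ((2*(n:ℝ) - 1) / A.card) • ∑ U ∈ A, ⟪x, Uact n U a⟫ • Uact n U a) := by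
  refine ⟨fun U hU => ⟨(hA U hU).norm_Uact a ▸ ha, (hA U hU).inner_Uact_self a⟩, fun x hx => ?_⟩
  have hodd : 2 * (n:ℝ) - 1 ≠ 0 := sub_ne_zero.2 (by exact_mod_cast (by omega : 2 * n ≠ 1))
  have hcard : (#A : ℝ) ≠ 0 := by exact_mod_cast hA0.card_pos.ne'
  rw [sum_inner_Uact_smul_Uact hA hbal, ha, hx, one_pow, one_smul, zero_smul, sub_zero, smul_smul,
    div_mul_div_cancel₀ hcard, div_self hodd, one_smul]

theorem balanced_gives_moving_funtf (n : ℕ) (hn : 1 ≤ n)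
    (A : Finset ((Fin (2*n) → ℤˣ) × (Fin (2*n) → Fin (2*n))))
    (hA : ∀ U ∈ A, Adm n U) (hA0 : A.Nonempty) (hbal : IsBalanced n A)
    (a : EuclideanSpace ℝ (Fin (2*n))) (ha : ‖a‖ = 1) :
    (∀ U ∈ A, ‖Uact n U a‖ = 1 ∧ ⟪Uact n U a, a⟫ = 0) ∧
    (∀ x : EuclideanSpace ℝ (Fin (2*n)), ⟪x, a⟫ = 0 →
      x = ((2*(n:ℝ) - 1) / A.card) • ∑ U ∈ A, ⟪x, Uact n U a⟫ • Uact n U a) :=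
  balanced_gives_moving_funtf_general n A hA hA0 hbal a ha
end

section
/- Let n >= 1 and let A be a subset of A_{2n} such that there exist pairwise distinct p, q, r, s in {1,...,2n} with #{U in A : epsilon_p epsilon_q = 1, {k_r,k_s}={p,q}} != #{U in A : epsilon_p epsilon_q = -1, {k_r,k_s}={p,q}}. Then with a = (e_p + e_q)/sqrt(2), sum_{U in A} <U(a), e_r><U(a), e_s> != 0, hence {U(a) : U in A} is not a tight frame for T_a S^{2n-1}. -/
open Finset RealInnerProductSpace

/-!
For `a = (e_p + e_q)/√2` the coordinate `⟪U a, e_i⟫ = ε_{k_i} a_{k_i}` vanishes unless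
`k_i ∈ {p, q}`, so, `k` being injective, `⟪U a, e_r⟫⟪U a, e_s⟫` is `ε_p ε_q / 2` when
`{k_r, k_s} = {p, q}` and `0` otherwise. Summing over `A` gives half the difference of the two
counts, which is nonzero. A tight frame `x = C⁻¹ ∑ ⟪x, U a⟫ U a` of `a^⊥` would instead force
this sum to equal `C ⟪e_r, e_s⟫ = 0`, since `e_r ⊥ a`.
-/

theorem sum_inner_mul_inner_eq_zero_of_tight_frame {E ι : Type*} [NormedAddCommGroup E]
    [InnerProductSpace ℝ E] (s : Finset ι) (v : ι → E) (a x y : E) {C : ℝ} (hC : C ≠ 0)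
    (hframe : ∀ z : E, ⟪z, a⟫ = 0 → z = C⁻¹ • ∑ i ∈ s, ⟪z, v i⟫ • v i)
    (hx : ⟪x, a⟫ = 0) (hxy : ⟪x, y⟫ = 0) :
    ∑ i ∈ s, ⟪v i, x⟫ * ⟪v i, y⟫ = 0 := by
  have h := congrArg (⟪·, y⟫) (hframe x hx)
  simp only [hxy, real_inner_smul_left, sum_inner, zero_eq_mul, inv_eq_zero, hC,
    false_or] at h
  simpa only [real_inner_comm x] using h

theorem Int.cast_units_eq_ite_sub_ite (u : ℤˣ) :
    ((u : ℤ) : ℝ) = (if u = 1 then 1 else 0) - (if u = -1 then 1 else 0) := by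
  rcases Int.units_eq_one_or u with rfl | rfl <;> simp

theorem sum_ite_units_eq_card_sub_card {α : Type*} (A : Finset α) (ε : α → ℤˣ)
    (P : α → Prop) [DecidablePred P] :
    ∑ U ∈ A, (if P U then ((ε U : ℤ) : ℝ) else 0) =
      (A.filter (fun U => ε U = 1 ∧ P U)).card - (A.filter (fun U => ε U = -1 ∧ P U)).card := by
  simp only [← sum_filter, Int.cast_units_eq_ite_sub_ite, sum_sub_distrib, filter_filter,
    ← cast_card, and_comm]

theorem inner_Uact_single (n : ℕ) (U : (Fin (2*n) → ℤˣ) × (Fin (2*n) → Fin (2*n)))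
    (a : EuclideanSpace ℝ (Fin (2*n))) (i : Fin (2*n)) :
    ⟪Uact n U a, EuclideanSpace.single i (1:ℝ)⟫ = ((U.1 (U.2 i) : ℤ) : ℝ) * a (U.2 i) := by
  simp [EuclideanSpace.inner_single_right, Uact]

theorem EuclideanSpace.smul_single_add_single_apply {ι : Type*} [Fintype ι] [DecidableEq ι]
    {p q : ι} (hpq : p ≠ q) (c : ℝ) (j : ι) :
    (c • (EuclideanSpace.single p (1:ℝ) + EuclideanSpace.single q 1) : EuclideanSpace ℝ ι) j =
      if j = p ∨ j = q then c else 0 := by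
  rcases eq_or_ne j p with rfl | hp
  · simp [hpq]
  rcases eq_or_ne j q with rfl | hq
  · simp [hp.symm]
  · simp [hp, hq]

theorem inner_Uact_single_mul_inner_Uact_single (n : ℕ)
    (U : (Fin (2*n) → ℤˣ) × (Fin (2*n) → Fin (2*n))) (hk : Function.Injective U.2)
    {p q r s : Fin (2*n)} (hpq : p ≠ q) (hrs : r ≠ s) (c : ℝ) :
    ⟪Uact n U (c • (EuclideanSpace.single p 1 + EuclideanSpace.single q 1)),
        EuclideanSpace.single r (1:ℝ)⟫ *
      ⟪Uact n U (c • (EuclideanSpace.single p 1 + EuclideanSpace.single q 1)),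
        EuclideanSpace.single s (1:ℝ)⟫ =
      c ^ 2 * if U.2 r = p ∧ U.2 s = q ∨ U.2 r = q ∧ U.2 s = p
        then (((U.1 p * U.1 q : ℤˣ) : ℤ) : ℝ) else 0 := by
  have hk' : U.2 r ≠ U.2 s := hk.ne hrs
  simp only [inner_Uact_single, EuclideanSpace.smul_single_add_single_apply hpq]
  push_cast
  split_ifs <;> grind

theorem unbalanced_ii_not_tight_frame_general (n : ℕ)
    (A : Finset ((Fin (2*n) → ℤˣ) × (Fin (2*n) → Fin (2*n))))
    (hA : ∀ U ∈ A, Adm n U) (p q r s : Fin (2*n))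
    (hpq : p ≠ q) (hpr : p ≠ r) (hqr : q ≠ r) (hrs : r ≠ s)
    (hcount : (A.filter (fun U => U.1 p * U.1 q = 1 ∧
        (U.2 r = p ∧ U.2 s = q ∨ U.2 r = q ∧ U.2 s = p))).card ≠
      (A.filter (fun U => U.1 p * U.1 q = -1 ∧
        (U.2 r = p ∧ U.2 s = q ∨ U.2 r = q ∧ U.2 s = p))).card)
    (a : EuclideanSpace ℝ (Fin (2*n)))
    (ha : a = (Real.sqrt 2)⁻¹ •
      (EuclideanSpace.single p (1:ℝ) + EuclideanSpace.single q (1:ℝ))) :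
    (∑ U ∈ A, ⟪Uact n U a, EuclideanSpace.single r (1:ℝ)⟫ *
        ⟪Uact n U a, EuclideanSpace.single s (1:ℝ)⟫ ≠ 0) ∧
    ¬ (∃ C : ℝ, C > 0 ∧ ∀ x : EuclideanSpace ℝ (Fin (2*n)), ⟪x, a⟫ = 0 →
      x = C⁻¹ • ∑ U ∈ A, ⟪x, Uact n U a⟫ • Uact n U a) := by
  have hterm : ∀ U ∈ A, ⟪Uact n U a, EuclideanSpace.single r (1:ℝ)⟫ *
        ⟪Uact n U a, EuclideanSpace.single s (1:ℝ)⟫ =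
      2⁻¹ * if U.2 r = p ∧ U.2 s = q ∨ U.2 r = q ∧ U.2 s = p
        then (((U.1 p * U.1 q : ℤˣ) : ℤ) : ℝ) else 0 := fun U hU => by
    have hk : Function.Injective U.2 := Function.LeftInverse.injective (hA U hU).2
    rw [ha, inner_Uact_single_mul_inner_Uact_single n U hk hpq hrs, inv_pow,
      Real.sq_sqrt zero_le_two]
  have hS : ∑ U ∈ A, ⟪Uact n U a, EuclideanSpace.single r (1:ℝ)⟫ *
      ⟪Uact n U a, EuclideanSpace.single s (1:ℝ)⟫ ≠ 0 := by
    rw [sum_congr rfl hterm, ← mul_sum, sum_ite_units_eq_card_sub_card]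
    exact mul_ne_zero (by norm_num) (sub_ne_zero.mpr (by exact_mod_cast hcount))
  refine ⟨hS, fun ⟨C, hC, hframe⟩ => hS ?_⟩
  apply sum_inner_mul_inner_eq_zero_of_tight_frame A (Uact n · a) a _ _ hC.ne' hframe
  · simp [EuclideanSpace.inner_single_left, ha, hpr.symm, hqr.symm]
  · simp [EuclideanSpace.inner_single_left, hrs]

theorem unbalanced_ii_not_tight_frame (n : ℕ) (hn : 1 ≤ n)
    (A : Finset ((Fin (2*n) → ℤˣ) × (Fin (2*n) → Fin (2*n))))
    (hA : ∀ U ∈ A, Adm n U) (p q r s : Fin (2*n))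
    (hpq : p ≠ q) (hpr : p ≠ r) (hps : p ≠ s) (hqr : q ≠ r) (hqs : q ≠ s) (hrs : r ≠ s)
    (hcount : (A.filter (fun U => U.1 p * U.1 q = 1 ∧
        (U.2 r = p ∧ U.2 s = q ∨ U.2 r = q ∧ U.2 s = p))).card ≠
      (A.filter (fun U => U.1 p * U.1 q = -1 ∧
        (U.2 r = p ∧ U.2 s = q ∨ U.2 r = q ∧ U.2 s = p))).card)
    (a : EuclideanSpace ℝ (Fin (2*n)))
    (ha : a = (Real.sqrt 2)⁻¹ •
      (EuclideanSpace.single p (1:ℝ) + EuclideanSpace.single q (1:ℝ))) :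
    (∑ U ∈ A, ⟪Uact n U a, EuclideanSpace.single r (1:ℝ)⟫ *
        ⟪Uact n U a, EuclideanSpace.single s (1:ℝ)⟫ ≠ 0) ∧
    ¬ (∃ C : ℝ, C > 0 ∧ ∀ x : EuclideanSpace ℝ (Fin (2*n)), ⟪x, a⟫ = 0 →
      x = C⁻¹ • ∑ U ∈ A, ⟪x, Uact n U a⟫ • Uact n U a) :=
  unbalanced_ii_not_tight_frame_general n A hA p q r s hpq hpr hqr hrs hcount a ha
end

section
/- For every n >= 1, define the 2n x 2n matrix M by m_{i,j} = 0 if i = j; m_{i,j} = ((i+j-2) mod (2n-1)) + 1 if i != j and 1 <= i, j < 2n; m_{i,2n} = ((2i-2) mod (2n-1)) + 1 for 1 <= i < 2n; and m_{2n,j} = ((2j-2) mod (2n-1)) + 1 for 1 <= j < 2n. Then M is symmetric, has zero diagonal, and every row of M is a permutation of {0, 1, ..., 2n-1}. -/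
/-!
Write `m = 2n - 1`. On the first `2n - 1` rows and columns the off-diagonal entries are
`(i - 1) + (j - 1) mod m`, shifted by one: each row of this addition table hits every residue
once, and the residue it would have at the diagonal is moved to the last column. The last row
is `2(j - 1) mod m`, shifted by one, which is again a bijection because `m` is odd.
-/

open Finset

/-- The entry `m_{i,j}` (with 1-based indices `i, j ∈ {1,...,2n}`) of the matrix `M`. -/
def mEnt (n i j : ℕ) : ℕ :=
  if i = j then 0
  else if i < 2*n ∧ j < 2*n then (i + j - 2) % (2*n - 1) + 1
  else if j = 2*n then (2*i - 2) % (2*n - 1) + 1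
  else (2*j - 2) % (2*n - 1) + 1

theorem Nat.exists_lt_add_mod_eq {m a r : ℕ} (ha : a < m) (hr : r < m) :
    ∃ b < m, (a + b) % m = r := by
  rcases le_or_gt a r with har | har
  · exact ⟨r - a, by omega, by rw [Nat.add_sub_cancel' har, Nat.mod_eq_of_lt hr]⟩
  · refine ⟨m + r - a, by omega, ?_⟩
    rw [show a + (m + r - a) = r + m by omega, Nat.add_mod_right, Nat.mod_eq_of_lt hr]

theorem Nat.exists_lt_two_mul_mod_eq {m r : ℕ} (hm : Odd m) (hr : r < m) :
    ∃ b < m, 2 * b % m = r := by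
  obtain ⟨k, rfl⟩ := hm
  rcases Nat.even_or_odd r with ⟨s, rfl⟩ | ⟨s, rfl⟩
  · exact ⟨s, by omega, by rw [two_mul, Nat.mod_eq_of_lt hr]⟩
  · refine ⟨s + k + 1, by omega, ?_⟩
    rw [show 2 * (s + k + 1) = 2 * s + 1 + (2 * k + 1) by ring, Nat.add_mod_right,
      Nat.mod_eq_of_lt hr]

section mEnt

variable {n i j : ℕ}

@[simp]
theorem mEnt_self (n i : ℕ) : mEnt n i i = 0 := by
  simp [mEnt]

theorem mEnt_of_lt (hij : i ≠ j) (hi : i < 2 * n) (hj : j < 2 * n) :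
    mEnt n i j = (i + j - 2) % (2 * n - 1) + 1 := by
  simp [mEnt, hij, hi, hj]

theorem mEnt_last_right (hi : i < 2 * n) :
    mEnt n i (2 * n) = (2 * i - 2) % (2 * n - 1) + 1 := by
  simp [mEnt, hi.ne]

theorem mEnt_last_left (hj : j < 2 * n) :
    mEnt n (2 * n) j = (2 * j - 2) % (2 * n - 1) + 1 := by
  simp [mEnt, hj.ne', hj.ne]

theorem mEnt_comm (hi : i ≤ 2 * n) (hj : j ≤ 2 * n) : mEnt n i j = mEnt n j i := by
  rcases eq_or_ne i j with rfl | hij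
  · rfl
  rcases hi.lt_or_eq with hi | rfl <;> rcases hj.lt_or_eq with hj | rfl
  · rw [mEnt_of_lt hij hi hj, mEnt_of_lt hij.symm hj hi, Nat.add_comm i j]
  · rw [mEnt_last_right hi, mEnt_last_left hi]
  · rw [mEnt_last_right hj, mEnt_last_left hj]
  · exact absurd rfl hij

theorem mEnt_lt (hn : 0 < n) : mEnt n i j < 2 * n := by
  have hmod : ∀ x, x % (2 * n - 1) + 1 < 2 * n := fun x => by
    have := Nat.mod_lt x (show 0 < 2 * n - 1 by omega)
    omega
  unfold mEnt
  split_ifs <;> first | omega | exact hmod _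

/-- The value `(2i - 2) % (2n - 1) + 1` that the columns `j < 2n` would give at `j = i` is
supplied by the last column instead. -/
theorem exists_mEnt_eq_succ_of_lt (hi₁ : 1 ≤ i) (hi : i < 2 * n) {r : ℕ}
    (hr : r < 2 * n - 1) : ∃ j ∈ Icc 1 (2 * n), mEnt n i j = r + 1 := by
  obtain ⟨b, hb, hab⟩ := Nat.exists_lt_add_mod_eq (show i - 1 < 2 * n - 1 by omega) hr
  rcases eq_or_ne (b + 1) i with hbi | hbi
  · refine ⟨2 * n, by simp; omega, ?_⟩
    rw [mEnt_last_right hi, show 2 * i - 2 = i - 1 + b by omega, hab]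
  · refine ⟨b + 1, by simp; omega, ?_⟩
    rw [mEnt_of_lt hbi.symm hi (by omega), show i + (b + 1) - 2 = i - 1 + b by omega, hab]

theorem exists_mEnt_last_eq_succ {r : ℕ} (hr : r < 2 * n - 1) :
    ∃ j ∈ Icc 1 (2 * n), mEnt n (2 * n) j = r + 1 := by
  obtain ⟨b, hb, hbr⟩ := Nat.exists_lt_two_mul_mod_eq 
    (Nat.Even.sub_odd (by omega) (even_two_mul n) odd_one) hr
  refine ⟨b + 1, by simp; omega, ?_⟩
  rw [mEnt_last_left (by omega), show 2 * (b + 1) - 2 = 2 * b by omega, hbr]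

theorem image_mEnt_row (hi : i ∈ Icc 1 (2 * n)) :
    (Icc 1 (2 * n)).image (mEnt n i) = range (2 * n) := by
  rw [mem_Icc] at hi
  ext x
  simp only [mem_image, mem_range]
  constructor
  · rintro ⟨j, -, rfl⟩
    exact mEnt_lt (by omega)
  · intro hx
    rcases x with _ | r
    · exact ⟨i, mem_Icc.2 hi, mEnt_self n i⟩
    rcases hi.2.lt_or_eq with hi' | rfl
    · exact exists_mEnt_eq_succ_of_lt hi.1 hi' (by omega)
    · exact exists_mEnt_last_eq_succ (by omega)

end mEnt

theorem matrix_M_properties_general (n : ℕ) :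
    (∀ i ∈ Finset.Icc 1 (2*n), ∀ j ∈ Finset.Icc 1 (2*n), mEnt n i j = mEnt n j i) ∧
    (∀ i ∈ Finset.Icc 1 (2*n), mEnt n i i = 0) ∧
    (∀ i ∈ Finset.Icc 1 (2*n),
      (Finset.Icc 1 (2*n)).image (fun j => mEnt n i j) = Finset.range (2*n)) :=
  ⟨fun _ hi _ hj => mEnt_comm (mem_Icc.1 hi).2 (mem_Icc.1 hj).2,
    fun i _ => mEnt_self n i,
    fun _ hi => image_mEnt_row hi⟩

theorem matrix_M_properties (n : ℕ) (hn : 1 ≤ n) :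
    (∀ i ∈ Finset.Icc 1 (2*n), ∀ j ∈ Finset.Icc 1 (2*n), mEnt n i j = mEnt n j i) ∧
    (∀ i ∈ Finset.Icc 1 (2*n), mEnt n i i = 0) ∧
    (∀ i ∈ Finset.Icc 1 (2*n),
      (Finset.Icc 1 (2*n)).image (fun j => mEnt n i j) = Finset.range (2*n)) :=
  matrix_M_properties_general n
end
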